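/- Let M, Y, A be real-valued random variables with A binary, and suppose E[M^(0) | A=0] − E[M^(0) | A=1] = E[Y^(0) | A=0] − E[Y^(0) | A=1] (additive equi-confounding for the untreated potential outcomes), where Y = Y^(1) on {A=1} and Y = Y^(0) on {A=0}, and similarly for M. Then E[Y^(1) − Y^(0) | A=1] = E[Y | A=1] − E[Y | A=0] + E[M | A=0] − E[M^(0) | A=1]. -/
import Mathlib


open MeasureTheory

/-- Conditional expectation of `W` given the event `s`. -/
noncomputable def cexp {Ω : Type*} [MeasurableSpace Ω] (μ : Measure Ω)
    (W : Ω → ℝ) (s : Set Ω) : ℝ :=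
  (∫ ω in s, W ω ∂μ) / (μ s).toReal

/-- Conditional probability of `s` given the event `t`. -/
noncomputable def cpr {Ω : Type*} [MeasurableSpace Ω] (μ : Measure Ω)
    (s t : Set Ω) : ℝ :=
  (μ (s ∩ t)).toReal / (μ t).toReal

/-- Conditional independence of the random variable `W` and the event `s`,
given the event `C`. -/
def CIset {Ω : Type*} [MeasurableSpace Ω] (μ : Measure Ω) {β : Type*} [MeasurableSpace β]
    (W : Ω → β) (s C : Set Ω) : Prop :=
  ∀ S : Set β, MeasurableSet S →
    (μ (W ⁻¹' S ∩ s ∩ C)).toReal * (μ C).toReal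
      = (μ (W ⁻¹' S ∩ C)).toReal * (μ (s ∩ C)).toReal

/-- Conditional independence of the random variables `W1` and `W2`
given the event `C`. -/
def CIfun2 {Ω : Type*} [MeasurableSpace Ω] (μ : Measure Ω)
    {β1 β2 : Type*} [MeasurableSpace β1] [MeasurableSpace β2]
    (W1 : Ω → β1) (W2 : Ω → β2) (C : Set Ω) : Prop :=
  ∀ (S1 : Set β1) (S2 : Set β2), MeasurableSet S1 → MeasurableSet S2 →
    (μ (W1 ⁻¹' S1 ∩ W2 ⁻¹' S2 ∩ C)).toReal * (μ C).toReal
      = (μ (W1 ⁻¹' S1 ∩ C)).toReal * (μ (W2 ⁻¹' S2 ∩ C)).toReal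

/-- Domain indicator: observational (`O`) or experimental (`E`). -/
inductive Dom : Type
  | O
  | E
deriving DecidableEq

/-- Conditional CDF of `W` given the event `C`. -/
noncomputable def ccdf {Ω : Type*} [MeasurableSpace Ω] (μ : Measure Ω)
    (W : Ω → ℝ) (C : Set Ω) (w : ℝ) : ℝ :=
  (μ ({ω | W ω ≤ w} ∩ C)).toReal / (μ C).toReal


theorem stmt0 {Ω : Type*} [MeasurableSpace Ω] (μ : Measure Ω) [IsProbabilityMeasure μ]
    (A M Y M0 M1 Y0 Y1 : Ω → ℝ)
    (hAmeas : Measurable A)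
    (hAbin : ∀ ω, A ω = 0 ∨ A ω = 1)
    (hY : ∀ ω, Y ω = A ω * Y1 ω + (1 - A ω) * Y0 ω)
    (hM : ∀ ω, M ω = A ω * M1 ω + (1 - A ω) * M0 ω)
    (h1 : μ {ω | A ω = 1} ≠ 0) (h0 : μ {ω | A ω = 0} ≠ 0)
    (hiY0 : Integrable Y0 μ) (hiY1 : Integrable Y1 μ)
    (hiM0 : Integrable M0 μ) (hiM1 : Integrable M1 μ)
    (hequi : cexp μ M0 {ω | A ω = 0} - cexp μ M0 {ω | A ω = 1}
      = cexp μ Y0 {ω | A ω = 0} - cexp μ Y0 {ω | A ω = 1}) :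
    cexp μ (fun ω => Y1 ω - Y0 ω) {ω | A ω = 1}
      = cexp μ Y {ω | A ω = 1} - cexp μ Y {ω | A ω = 0}
        + cexp μ M {ω | A ω = 0} - cexp μ M0 {ω | A ω = 1} := by
  have hm1 : MeasurableSet {ω | A ω = 1} := hAmeas (measurableSet_singleton 1)
  have hm0 : MeasurableSet {ω | A ω = 0} := hAmeas (measurableSet_singleton 0)
  have hY1eq : cexp μ Y {ω | A ω = 1} = cexp μ Y1 {ω | A ω = 1} := by
    unfold cexp
    congr 1
    apply setIntegral_congr_fun hm1
    intro ω hω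
    simp only [Set.mem_setOf_eq] at hω
    simp [hY ω, hω]
  have hY0eq : cexp μ Y {ω | A ω = 0} = cexp μ Y0 {ω | A ω = 0} := by
    unfold cexp
    congr 1
    apply setIntegral_congr_fun hm0
    intro ω hω
    simp only [Set.mem_setOf_eq] at hω
    simp [hY ω, hω]
  have hM0eq : cexp μ M {ω | A ω = 0} = cexp μ M0 {ω | A ω = 0} := by
    unfold cexp
    congr 1
    apply setIntegral_congr_fun hm0
    intro ω hω
    simp only [Set.mem_setOf_eq] at hω
    simp [hM ω, hω]
  have hsub : cexp μ (fun ω => Y1 ω - Y0 ω) {ω | A ω = 1}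
      = cexp μ Y1 {ω | A ω = 1} - cexp μ Y0 {ω | A ω = 1} := by
    unfold cexp
    rw [integral_sub hiY1.integrableOn hiY0.integrableOn, sub_div]
  rw [hY1eq, hY0eq, hM0eq, hsub]
  linarith [hequi]
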